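/- arXiv:1310.7917 — 2 statements merged into one kernel-verified Lean document; each statement's English description precedes it below -/
import Mathlib

section
/- Let G = SL(2,ℂ) with the involution θ(g) = w·g·w⁻¹ where w = diag(i, −i) (the Cartan involution of SL(2,ℝ)). Then H¹_θ(ℤ/2, G) is trivial: every g ∈ SL(2,ℂ) with g·θ(g) = 1 can be written g = x·θ(x)⁻¹ for some x ∈ SL(2,ℂ). In particular, −I = n·θ(n⁻¹) for n the Weyl group representative [[0,1],[−1,0]]. -/
/-!
Since `θ = Inn w` with `w² = -1`, the cocycle condition `g θ(g) = 1` says `(g w)² = -1`, and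
`g = x θ(x)⁻¹` says `g w = x w x⁻¹`. So it suffices that every `h ∈ SL(2,ℂ)` with `h² = -1` is
conjugate to `w` in `SL(2,ℂ)`. Such an `h` has trace zero, and for every matrix `m` the
"average" `h m + m w` intertwines `h` and `w`; for `m = 1` or `m = [[0,1],[-1,0]]` it is
invertible, and dividing by a square root of its determinant puts it in `SL(2,ℂ)`.
-/

open Matrix

theorem eq_mul_inv_conj_of_mul_mul_eq_mul {G : Type*} [Group G] {g w x : G}
    (h : g * w * x = x * w) : g = x * (w * x * w⁻¹)⁻¹ :=
  calc g = g * w * x * x⁻¹ * w⁻¹ := by group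
    _ = x * (w * x * w⁻¹)⁻¹ := by rw [h]; group

theorem intertwines_mul_add_mul_of_mul_self_eq_neg_one {R : Type*} [Ring R] {h w : R}
    (hh : h * h = -1) (hw : w * w = -1) (m : R) :
    h * (h * m + m * w) = (h * m + m * w) * w := by
  rw [mul_add, add_mul, ← mul_assoc, hh, mul_assoc, mul_assoc m, hw, neg_one_mul, mul_neg_one,
    add_comm]

theorem exists_specialLinearGroup_mul_eq_mul_of_det_ne_zero {K n : Type*} [Field K]
    [IsAlgClosed K] [Fintype n] [DecidableEq n] [Nonempty n] {h w x : Matrix n n K}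
    (hx : x.det ≠ 0) (hxw : h * x = x * w) : ∃ y : SpecialLinearGroup n K, h * y = y * w := by
  obtain ⟨s, hs⟩ := IsAlgClosed.exists_pow_nat_eq x.det (Fintype.card_pos (α := n))
  refine ⟨⟨s⁻¹ • x, ?_⟩, ?_⟩
  · rw [det_smul, inv_pow, hs, inv_mul_cancel₀ hx]
  · rw [Matrix.mul_smul, smul_mul, hxw]

namespace Matrix

theorem trace_fin_two_eq_zero_of_mul_self_eq_neg_one {R : Type*} [CommRing R] [NoZeroDivisors R]
    {h : Matrix (Fin 2) (Fin 2) R} (hdet : h.det = 1) (hsq : h * h = -1) : h.trace = 0 := by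
  rw [det_fin_two] at hdet
  have h00 := congrFun₂ hsq 0 0
  have h11 := congrFun₂ hsq 1 1
  simp only [mul_apply, Fin.sum_univ_two, neg_apply, one_apply_eq] at h00 h11
  have : h.trace ^ 2 = 0 := by
    rw [trace_fin_two]
    linear_combination h00 + h11 + 2 * hdet
  exact pow_eq_zero_iff two_ne_zero |>.mp this

section Field

variable {K : Type*} [Field K]

theorem diag_mul_self_eq_neg_one {i : K} (hi : i * i = -1) :
    !![i, 0; 0, -i] * !![i, 0; 0, -i] = (-1 : Matrix (Fin 2) (Fin 2) K) := by
  rw [mul_fin_two, one_fin_two]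
  ext a b; fin_cases a <;> fin_cases b <;> simp [hi]

theorem exists_det_ne_zero_mul_eq_mul_diag [NeZero (2 : K)] {i : K} (hi : i * i = -1)
    {h : Matrix (Fin 2) (Fin 2) K} (hdet : h.det = 1) (hsq : h * h = -1) :
    ∃ x : Matrix (Fin 2) (Fin 2) K, x.det ≠ 0 ∧ h * x = x * !![i, 0; 0, -i] := by
  suffices ∃ m, (h * m + m * !![i, 0; 0, -i]).det ≠ 0 from
    let ⟨m, hm⟩ := this
    ⟨_, hm, intertwines_mul_add_mul_of_mul_self_eq_neg_one hsq (diag_mul_self_eq_neg_one hi) m⟩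
  have htr : h 1 1 = -h 0 0 :=
    eq_neg_of_add_eq_zero_right (by
      rw [← trace_fin_two]; exact trace_fin_two_eq_zero_of_mul_self_eq_neg_one hdet hsq)
  rw [det_fin_two, htr] at hdet
  rw [eta_fin_two h, htr]
  by_cases ha : h 0 0 = -i
  · refine ⟨!![0, 1; -1, 0], ?_⟩
    have hdet' : -(h 0 1 * h 1 0) - (h 0 0 - i) * (h 0 0 - i) = 2 * 2 := by
      rw [ha] at hdet ⊢
      linear_combination hdet - 3 * hi
    simpa [det_fin_two, ← sub_eq_add_neg, hdet'] using
      (mul_ne_zero two_ne_zero two_ne_zero : (2 * 2 : K) ≠ 0)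
  · refine ⟨1, ?_⟩
    have hai : 1 - h 0 0 * i ≠ 0 := fun h0 ↦ ha (by linear_combination i * h0 + h 0 0 * hi)
    have hdet' : (h 0 0 + i) * (-h 0 0 - i) - h 0 1 * h 1 0 = 2 * (1 - h 0 0 * i) := by
      linear_combination hdet - hi
    simpa [det_fin_two, ← sub_eq_add_neg, hdet'] using mul_ne_zero two_ne_zero hai

end Field

end Matrix

/-- For `SL(2,ℂ)` with the Cartan involution `θ = Inn(diag(i,-i))` of `SL(2,ℝ)`,
`H¹_θ(ℤ/2, G)` is trivial: every `g` with `g θ(g) = 1` is of the form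
`x θ(x)⁻¹`.  In particular `-I = n θ(n⁻¹)` for `n = [[0,1],[-1,0]]`. -/
theorem h1_sl2R_trivial (w n : Matrix.SpecialLinearGroup (Fin 2) ℂ)
    (hw : (w : Matrix (Fin 2) (Fin 2) ℂ) = !![Complex.I, 0; 0, -Complex.I])
    (hn : (n : Matrix (Fin 2) (Fin 2) ℂ) = !![0, 1; -1, 0]) :
    (∀ g : Matrix.SpecialLinearGroup (Fin 2) ℂ,
      g * (w * g * w⁻¹) = 1 → ∃ x, g = x * (w * x * w⁻¹)⁻¹) ∧
    ((n * (w * n⁻¹ * w⁻¹) : Matrix.SpecialLinearGroup (Fin 2) ℂ) :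
        Matrix (Fin 2) (Fin 2) ℂ) = -1 := by
  refine ⟨fun g hg ↦ ?_, by simp [adjugate_fin_two, hn, hw, one_fin_two]⟩
  have hgw : g * w * (g * w) = w * w :=
    calc g * w * (g * w) = g * (w * g * w⁻¹) * w * w := by group
      _ = w * w := by rw [hg, one_mul]
  have hsq : (g * w : Matrix (Fin 2) (Fin 2) ℂ) * (g * w) = -1 := by
    simpa [hw, diag_mul_self_eq_neg_one Complex.I_mul_I] using
      congrArg ((↑) : SpecialLinearGroup (Fin 2) ℂ → Matrix (Fin 2) (Fin 2) ℂ) hgw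
  obtain ⟨y, hy, hgwy⟩ := exists_det_ne_zero_mul_eq_mul_diag Complex.I_mul_I (g * w).2 hsq
  obtain ⟨x, hx⟩ := exists_specialLinearGroup_mul_eq_mul_of_det_ne_zero hy hgwy
  refine ⟨x, eq_mul_inv_conj_of_mul_mul_eq_mul (Subtype.ext ?_)⟩
  simpa [hw] using hx
end

section
/- Let G be a group with involution θ, Z its center, δG = G ⋊ ⟨δ⟩ as above, and fix a strong involution x ∈ G·δ with z = x² ∈ Z. Let θ_x = Inn(x)|_G (an involutive automorphism of G). Then right multiplication y ↦ y·x⁻¹ gives a bijection from {y ∈ G·δ : y² = z} to {g ∈ G : g·θ_x(g) = 1}, which descends to a bijection between the set of G-conjugacy classes in {y ∈ G·δ : y² = z} and H¹_{θ_x}(ℤ/2, G). -/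
/-- `θ_x = Inn(x)` for a strong involution `x = ι g₀ * δ` restricted to `G`. -/
def thetaX {G : Type*} [Group G] (θ : G →* G) (g₀ : G) : G → G :=
  fun a => g₀ * θ a * g₀⁻¹

/-! Everything happens inside `Gh`, where `θ_x` is conjugation by `x = ι g₀ * δ` and
`ι(G)·δ = ι(G)·x`. Writing `y = ι a * x` gives `y² = ι (a * θ_x a) * x²`, so `y² = x² = ι z`
exactly when `a * θ_x a = 1`; conjugating `y` by `ι u` multiplies `a` to
`u * a * (θ_x u)⁻¹`; and `θ_x² = Inn(ι z)` is trivial on `ι(G)` because `z` is central. -/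

section ConjugationByX

variable {G Gh : Type*} [Group G] [Group Gh] {ι : G →* Gh} {x : Gh} {σ : G → G}

theorem mul_sq_of_conj (hσ : ∀ a, ι (σ a) = x * ι a * x⁻¹) (a : G) :
    (ι a * x) ^ 2 = ι (a * σ a) * x ^ 2 := by
  rw [map_mul, hσ, sq, sq]
  group

theorem conj_mul_of_conj (hσ : ∀ a, ι (σ a) = x * ι a * x⁻¹) (u a : G) :
    ι u * (ι a * x) * (ι u)⁻¹ = ι (u * a * (σ u)⁻¹) * x := by
  rw [map_mul, map_mul, map_inv, hσ]
  group

theorem involutive_of_conj (hι : Function.Injective ι) (hσ : ∀ a, ι (σ a) = x * ι a * x⁻¹)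
    {z : G} (hz : z ∈ Subgroup.center G) (hx : x ^ 2 = ι z) : Function.Involutive σ := by
  intro a
  apply hι
  calc ι (σ (σ a)) = x ^ 2 * ι a * (x ^ 2)⁻¹ := by rw [hσ, hσ, sq]; group
    _ = ι (z * a * z⁻¹) := by rw [hx, map_mul, map_mul, map_inv]
    _ = ι a := by rw [(Subgroup.mem_center_iff.mp hz a).symm, mul_inv_cancel_right]

theorem mul_sq_eq_iff (hι : Function.Injective ι) (hσ : ∀ a, ι (σ a) = x * ι a * x⁻¹)
    {z : G} (hx : x ^ 2 = ι z) (a : G) : (ι a * x) ^ 2 = ι z ↔ a * σ a = 1 := by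
  rw [mul_sq_of_conj hσ, hx, ← map_mul, hι.eq_iff, mul_eq_right]

theorem exists_mul_inv_eq_and_sq_eq_iff (hι : Function.Injective ι)
    (hσ : ∀ a, ι (σ a) = x * ι a * x⁻¹) {z : G} (hx : x ^ 2 = ι z) (y : Gh) :
    ((∃ a, y * x⁻¹ = ι a) ∧ y ^ 2 = ι z) ↔ ∃ a, a * σ a = 1 ∧ y * x⁻¹ = ι a := by
  simp_rw [mul_inv_eq_iff_eq_mul]
  constructor
  · rintro ⟨⟨a, rfl⟩, hy⟩
    exact ⟨a, (mul_sq_eq_iff hι hσ hx a).1 hy, rfl⟩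
  · rintro ⟨a, ha, rfl⟩
    exact ⟨⟨a, rfl⟩, (mul_sq_eq_iff hι hσ hx a).2 ha⟩

noncomputable def cocyclesEquivOfMulInv (hι : Function.Injective ι) (P : Gh → Prop)
    (hP : ∀ y, P y ↔ ∃ a, a * σ a = 1 ∧ y * x⁻¹ = ι a) :
    {a : G // a * σ a = 1} ≃ {y : Gh // P y} :=
  Equiv.ofBijective (fun a => ⟨ι a * x, (hP _).2 ⟨a, a.2, mul_inv_cancel_right _ _⟩⟩) <| by
    constructor
    · intro a b hab
      exact Subtype.ext (hι (mul_right_cancel (congrArg Subtype.val hab)))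
    · rintro ⟨y, hy⟩
      obtain ⟨a, ha, hya⟩ := (hP y).1 hy
      exact ⟨⟨a, ha⟩, Subtype.ext (mul_inv_eq_iff_eq_mul.mp hya).symm⟩

theorem twisted_rel_iff_conj (hι : Function.Injective ι) (hσ : ∀ a, ι (σ a) = x * ι a * x⁻¹)
    (a b : G) :
    (∃ u, b = u * a * (σ u)⁻¹) ↔ ∃ u : G, ι b * x = ι u * (ι a * x) * (ι u)⁻¹ := by
  simp_rw [conj_mul_of_conj hσ, mul_left_inj, hι.eq_iff]

end ConjugationByX

theorem map_thetaX {G Gh : Type*} [Group G] [Group Gh] {θ : G →* G} {ι : G →* Gh} {δ : Gh}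
    (hconj : ∀ g : G, δ * ι g * δ⁻¹ = ι (θ g)) (g₀ a : G) :
    ι (thetaX θ g₀ a) = (ι g₀ * δ) * ι a * (ι g₀ * δ)⁻¹ := by
  simp only [thetaX, map_mul, map_inv, ← hconj]
  group

theorem exists_eq_mul_iff_exists_mul_inv_eq {G Gh : Type*} [Group G] [Group Gh] (ι : G →* Gh)
    (g₀ : G) (δ y : Gh) : (∃ h, y = ι h * δ) ↔ ∃ a, y * (ι g₀ * δ)⁻¹ = ι a := by
  simp_rw [mul_inv_eq_iff_eq_mul]
  constructor
  · rintro ⟨h, rfl⟩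
    exact ⟨h * g₀⁻¹, by simp [mul_assoc]⟩
  · rintro ⟨a, rfl⟩
    exact ⟨a * g₀, by simp [mul_assoc]⟩

theorem fiber_of_invariant_general {G Gh : Type*} [Group G] [Group Gh]
    (θ : G →* G)
    (ι : G →* Gh) (hι : Function.Injective ι)
    (δ : Gh) (hconj : ∀ g : G, δ * ι g * δ⁻¹ = ι (θ g))
    (g₀ z : G) (hz : z ∈ Subgroup.center G) (hx2 : (ι g₀ * δ) ^ 2 = ι z) :
    (∀ a : G, thetaX θ g₀ (thetaX θ g₀ a) = a) ∧
    (∀ a : G, ι (thetaX θ g₀ a) = (ι g₀ * δ) * ι a * (ι g₀ * δ)⁻¹) ∧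
    (∀ y : Gh, ((∃ h : G, y = ι h * δ) ∧ y ^ 2 = ι z) ↔
      ∃ a : G, a * thetaX θ g₀ a = 1 ∧ y * (ι g₀ * δ)⁻¹ = ι a) ∧
    ∃ e : Quot (fun p q : {y : Gh // (∃ h : G, y = ι h * δ) ∧ y ^ 2 = ι z} =>
            ∃ u : G, (q : Gh) = ι u * (p : Gh) * (ι u)⁻¹) ≃
          Quot (fun p q : {a : G // a * thetaX θ g₀ a = 1} =>
            ∃ u : G, (q : G) = u * (p : G) * (thetaX θ g₀ u)⁻¹),
      ∀ (p : {y : Gh // (∃ h : G, y = ι h * δ) ∧ y ^ 2 = ι z})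
        (a : G) (h : a * thetaX θ g₀ a = 1),
        (p : Gh) * (ι g₀ * δ)⁻¹ = ι a →
        e (Quot.mk _ p) = Quot.mk _ ⟨a, h⟩ := by
  have hσ := map_thetaX hconj g₀
  have hfiber : ∀ y : Gh, ((∃ h : G, y = ι h * δ) ∧ y ^ 2 = ι z) ↔
      ∃ a : G, a * thetaX θ g₀ a = 1 ∧ y * (ι g₀ * δ)⁻¹ = ι a := fun y => by
    rw [exists_eq_mul_iff_exists_mul_inv_eq ι g₀]
    exact exists_mul_inv_eq_and_sq_eq_iff hι hσ hx2 y
  let f := cocyclesEquivOfMulInv hι _ hfiber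
  refine ⟨involutive_of_conj hι hσ hz hx2, hσ, hfiber,
    (Quot.congr f fun a b => twisted_rel_iff_conj hι hσ a b).symm, fun p a ha hpa => ?_⟩
  rw [Equiv.symm_apply_eq]
  exact congrArg (Quot.mk _) (Subtype.ext (mul_inv_eq_iff_eq_mul.mp hpa))

/-- Twisting by a strong involution `x` with `x² = z ∈ Z(G)`: `θ_x = Inn(x)|_G`
is an involution of `G`, and `y ↦ y x⁻¹` is a bijection from
`{y ∈ G δ : y² = z}` to `G^{-θ_x}` descending to a bijection between the set of
`G`-conjugacy classes of strong involutions of invariant `z` and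
`H¹_{θ_x}(ℤ/2, G)`. -/
theorem fiber_of_invariant {G Gh : Type*} [Group G] [Group Gh]
    (θ : G →* G) (hθ : ∀ g, θ (θ g) = g)
    (ι : G →* Gh) (hι : Function.Injective ι)
    (δ : Gh) (hδ : δ ^ 2 = 1) (hconj : ∀ g : G, δ * ι g * δ⁻¹ = ι (θ g))
    (g₀ z : G) (hz : z ∈ Subgroup.center G) (hx2 : (ι g₀ * δ) ^ 2 = ι z) :
    (∀ a : G, thetaX θ g₀ (thetaX θ g₀ a) = a) ∧
    (∀ a : G, ι (thetaX θ g₀ a) = (ι g₀ * δ) * ι a * (ι g₀ * δ)⁻¹) ∧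
    (∀ y : Gh, ((∃ h : G, y = ι h * δ) ∧ y ^ 2 = ι z) ↔
      ∃ a : G, a * thetaX θ g₀ a = 1 ∧ y * (ι g₀ * δ)⁻¹ = ι a) ∧
    ∃ e : Quot (fun p q : {y : Gh // (∃ h : G, y = ι h * δ) ∧ y ^ 2 = ι z} =>
            ∃ u : G, (q : Gh) = ι u * (p : Gh) * (ι u)⁻¹) ≃
          Quot (fun p q : {a : G // a * thetaX θ g₀ a = 1} =>
            ∃ u : G, (q : G) = u * (p : G) * (thetaX θ g₀ u)⁻¹),
      ∀ (p : {y : Gh // (∃ h : G, y = ι h * δ) ∧ y ^ 2 = ι z})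
        (a : G) (h : a * thetaX θ g₀ a = 1),
        (p : Gh) * (ι g₀ * δ)⁻¹ = ι a →
        e (Quot.mk _ p) = Quot.mk _ ⟨a, h⟩ :=
  fiber_of_invariant_general θ ι hι δ hconj g₀ z hz hx2
end
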